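/- Let a < b be reals and let f : ℝ → ℝ be a continuous function such that for every subset B ⊆ [a,b] with Lebesgue measure zero, the image f(B) is meager. Then f is constant on [a,b]. -/

import Mathlib

/-!
Push the restriction of Lebesgue measure to `[a, b]` forward along `f`. The resulting finite
measure `ν` on `ℝ` has only countably many atoms, so some countable dense set is `ν`-null, and by
outer regularity it is contained in a `ν`-null dense Gδ set `C`. The preimage of `C` in `[a, b]` is
Lebesgue-null, so its image is meagre by hypothesis; together with the meagre set `Cᶜ` it covers
`f '' [a, b]`. But this image is an interval, and a nondegenerate interval is not meagre.
-/

open MeasureTheory Set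

theorem Dense.exists_isGδ_dense_measure_eq_zero {X : Type*} [TopologicalSpace X]
    [MeasurableSpace X] {μ : Measure X} [μ.OuterRegular] {D : Set X} (hD : Dense D)
    (hμD : μ D = 0) : ∃ C, IsGδ C ∧ Dense C ∧ μ C = 0 := by
  have hU : ∀ n : ℕ, ∃ U ⊇ D, IsOpen U ∧ μ U < (n : ENNReal)⁻¹ := fun n =>
    D.exists_isOpen_lt_of_lt _ (hμD ▸ ENNReal.inv_pos.2 (ENNReal.natCast_ne_top n))
  choose U hDU hUo hμU using hU
  refine ⟨⋂ n, U n, .iInter_of_isOpen hUo, hD.mono (subset_iInter hDU), ?_⟩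
  by_contra hpos
  obtain ⟨n, hn⟩ := ENNReal.exists_inv_nat_lt hpos
  exact lt_irrefl _ ((hn.trans_le (measure_mono (iInter_subset U n))).trans (hμU n))

theorem Real.exists_dense_measure_eq_zero (μ : Measure ℝ) [SFinite μ] :
    ∃ D : Set ℝ, Dense D ∧ μ D = 0 := by
  have hatoms : {x : ℝ | 0 < μ {x}}.Countable :=
    Measure.countable_meas_pos_of_disjoint_iUnion (fun _ => measurableSet_singleton _)
      fun _ _ hxy => disjoint_singleton.2 hxy
  obtain ⟨D, hD_sub, hD_count, hD_dense⟩ := (hatoms.dense_compl ℝ).exists_countable_dense_subset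
  refine ⟨D, hD_dense, ?_⟩
  rw [← biUnion_of_singleton D, measure_biUnion_null_iff hD_count]
  intro x hx
  simpa using hD_sub hx

theorem Set.OrdConnected.subsingleton_of_isMeagre {X : Type*} [TopologicalSpace X] [LinearOrder X]
    [OrderTopology X] [DenselyOrdered X] [BaireSpace X] {S : Set X} (hS : S.OrdConnected)
    (hmeagre : IsMeagre S) : S.Subsingleton := by
  intro x hx y hy
  by_contra hxy
  wlog hlt : x < y generalizing x y
  · exact this hy hx (Ne.symm hxy) ((Ne.symm hxy).lt_of_le (not_lt.1 hlt))
  exact not_isMeagre_of_isOpen isOpen_Ioo (nonempty_Ioo.2 hlt)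
    (hmeagre.mono (Ioo_subset_Icc_self.trans (hS.out hx hy)))

theorem isMeagre_image_of_forall_measure_eq_zero {X : Type*} [MeasurableSpace X] {μ : Measure X}
    {s : Set X} [IsFiniteMeasure (μ.restrict s)] {f : X → ℝ} (hf : Measurable f)
    (h : ∀ B ⊆ s, μ B = 0 → IsMeagre (f '' B)) : IsMeagre (f '' s) := by
  set ν := (μ.restrict s).map f
  obtain ⟨D, hD_dense, hνD⟩ := Real.exists_dense_measure_eq_zero ν
  obtain ⟨C, hC_Gδ, hC_dense, hνC⟩ := hD_dense.exists_isGδ_dense_measure_eq_zero hνD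
  have hB : μ (s ∩ f ⁻¹' C) = 0 := by
    rwa [Measure.map_apply hf hC_Gδ.measurableSet, Measure.restrict_apply (hf hC_Gδ.measurableSet),
      inter_comm] at hνC
  have hCc : IsMeagre Cᶜ := by
    rw [IsMeagre, compl_compl]
    exact residual_of_dense_Gδ hC_Gδ hC_dense
  refine ((h _ inter_subset_left hB).union hCc).mono ?_
  rintro _ ⟨x, hx, rfl⟩
  by_cases hxC : f x ∈ C
  · exact Or.inl ⟨x, ⟨hx, hxC⟩, rfl⟩
  · exact Or.inr hxC

theorem stmt_9 (a b : ℝ) (hab : a < b) (f : ℝ → ℝ) (hf : Continuous f)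
    (hsmall : ∀ B : Set ℝ, B ⊆ Set.Icc a b → volume B = 0 → IsMeagre (f '' B)) :
    ∃ c : ℝ, ∀ x ∈ Set.Icc a b, f x = c := by
  have hconn : (f '' Icc a b).OrdConnected :=
    (isPreconnected_Icc.image f hf.continuousOn).ordConnected
  have hsub := hconn.subsingleton_of_isMeagre
    (isMeagre_image_of_forall_measure_eq_zero hf.measurable hsmall)
  exact ⟨f a, fun x hx => hsub (mem_image_of_mem f hx) (mem_image_of_mem f (left_mem_Icc.2 hab.le))⟩
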